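/- (Decision tree van den Berg–Kesten inequality.) Let G=(V,E) be a finite simple graph, let μ be the Bernoulli bond-percolation product measure on Ω={0,1}^E, and let (C₁,C₂) be sampled from μ×μ. Let T be any decision tree for pairs of configurations building the edge set S(C₁,C₂). Then for any closed-upward events A,B⊆Ω, P((C₁,C₂)∈A □_S B) ≤ μ(A)·μ(B). -/

import Mathlib

/-!
Induction on the decision tree, revealing the root edge `e` in both configurations. Given
`(C₁ e, C₂ e) = (b₁, b₂)`, the event `A □_S B` becomes the event of the same kind for the subtree
`child b₁ b₂`, with `A` and `B` replaced by their sections at `e`. At an `S̄`-node these are the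
sections at `b₁` and `b₂`. At an `S`-node the edge `e ∈ S` cannot lie in both witnesses, and a
witness that ignores `e` may as well see it closed, so one gets the union of the events for the
sections at `(false, b₁)` and at `(b₁, false)`. Hence the statement is proved for unions over
families of pairs of increasing events: `P(⋃ A □_S B) ≤ P(X)` with `X = ⋃ A × B`. At an
`S`-node, writing `X_{b₁b₂}` for the sections of `X`, induction bounds the left side by
`∑ μ(b₁) P(X_{0b₁} ∪ X_{b₁0})`, while `P(X) = ∑ μ(b₁) μ(b₂) P(X_{b₁b₂})`; these compare by
inclusion–exclusion, since `X₀₀ ⊆ X₀₁ ∩ X₁₀` and `X₀₁ ∪ X₁₀ ⊆ X₁₁`.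
-/

namespace DTPerc

variable {E : Type*} [Fintype E] [DecidableEq E]

/-- Bernoulli product weight of a configuration. -/
noncomputable def wt (p : E → ℝ) (C : E → Bool) : ℝ :=
  ∏ e, if C e then p e else 1 - p e

/-- Probability of an event under the Bernoulli product measure. -/
noncomputable def Pr (p : E → ℝ) (A : Set (E → Bool)) : ℝ :=
  ∑ C : E → Bool, A.indicator (wt p) C

/-- Probability of an event for an independent pair `(C₁, C₂) ~ μ × μ`. -/
noncomputable def Pr2 (p : E → ℝ) (A : Set ((E → Bool) × (E → Bool))) : ℝ :=
  ∑ x : (E → Bool) × (E → Bool), A.indicator (fun y => wt p y.1 * wt p y.2) x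

/-- A decision tree for pairs of configurations: every decision node queries an edge,
decides whether it goes to `S` (`toS = true`) or to `S̄`, and has four children indexed
by the pair of revealed values of the edge in the two configurations. -/
inductive PairTree (E : Type u) : Type u
  | leaf : PairTree E
  | node (e : E) (toS : Bool) (child : Bool → Bool → PairTree E) : PairTree E

/-- The edges queried along any root-to-leaf path are pairwise distinct
(`used` is the set of edges already queried above the current node). -/
def PairTree.valid : PairTree E → Finset E → Prop
  | .leaf, _ => True
  | .node e _ child, used =>
      e ∉ used ∧ ∀ b₁ b₂ : Bool, (child b₁ b₂).valid (insert e used)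

/-- The set `S(C₁, C₂)` built by the decision tree. -/
def PairTree.buildS : PairTree E → (E → Bool) → (E → Bool) → Finset E
  | .leaf, _, _ => ∅
  | .node e toS child, C₁, C₂ =>
      let rest := (child (C₁ e) (C₂ e)).buildS C₁ C₂
      if toS then insert e rest else rest

/-- `C₁ →_S C₂`: the configuration equal to `C₁` on `S` and to `C₂` off `S`. -/
def splice (S : Finset E) (C₁ C₂ : E → Bool) : E → Bool :=
  fun e => if e ∈ S then C₁ e else C₂ e

/-- An event is closed upward if it is preserved by opening more edges. -/
def UpwardClosed (A : Set (E → Bool)) : Prop :=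
  ∀ C₁ C₂ : E → Bool, C₁ ∈ A → (∀ e, C₁ e = true → C₂ e = true) → C₂ ∈ A

/-- `I` is a witness of the event `A` in the configuration `C`: every configuration
agreeing with `C` on `I` belongs to `A`. -/
def Witness (A : Set (E → Bool)) (C : E → Bool) (I : Finset E) : Prop :=
  ∀ C' : E → Bool, (∀ e ∈ I, C' e = C e) → C' ∈ A

/-- The disjoint occurrence `A □_S B` relative to the set `S(C₁,C₂)` built by the
decision tree `T`. -/
def BoxS (T : PairTree E) (A B : Set (E → Bool)) : Set ((E → Bool) × (E → Bool)) :=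
  {x | ∃ I J : Finset E,
        Witness A x.1 I ∧
        Witness B (splice (T.buildS x.1 x.2) x.1 x.2) J ∧
        ∀ e ∈ I ∩ J, e ∉ T.buildS x.1 x.2}


end DTPerc

namespace DTPerc

open Finset Function

variable {E : Type*}

lemma UpwardClosed.isUpperSet {A : Set (E → Bool)} (hA : UpwardClosed A) : IsUpperSet A :=
  fun _ _ hle hC => hA _ _ hC fun e => Bool.le_iff_imp.1 (hle e)

section FixEdge

variable [DecidableEq E]

def fixEdge (A : Set (E → Bool)) (e : E) (b : Bool) : Set (E → Bool) := (update · e b) ⁻¹' A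

def fixEdgePair (X : Set ((E → Bool) × (E → Bool))) (e : E) (b₁ b₂ : Bool) :
    Set ((E → Bool) × (E → Bool)) :=
  Prod.map (update · e b₁) (update · e b₂) ⁻¹' X

variable {A : Set (E → Bool)} {X : Set ((E → Bool) × (E → Bool))}

lemma IsUpperSet.fixEdge (hA : IsUpperSet A) (e : E) (b : Bool) : IsUpperSet (fixEdge A e b) :=
  hA.preimage fun _ _ h => update_le_update_iff.2 ⟨le_rfl, fun j _ => h j⟩

lemma fixEdge_false_subset (hA : IsUpperSet A) (e : E) : fixEdge A e false ⊆ A :=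
  fun _ hC => hA (update_le_self_iff.2 (Bool.false_le _)) hC

lemma fixEdgePair_mono (hX : IsUpperSet X) (e : E) {b₁ b₂ b₁' b₂' : Bool}
    (h₁ : b₁ ≤ b₁') (h₂ : b₂ ≤ b₂') : fixEdgePair X e b₁ b₂ ⊆ fixEdgePair X e b₁' b₂' :=
  fun _ hx => hX (Prod.mk_le_mk.2 ⟨update_le_update_iff'.2 h₁, update_le_update_iff'.2 h₂⟩) hx

lemma fixEdgePair_biUnion {ι : Type*} (s : Set ι) (Y : ι → Set ((E → Bool) × (E → Bool)))
    (e : E) (b₁ b₂ : Bool) :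
    fixEdgePair (⋃ i ∈ s, Y i) e b₁ b₂ = ⋃ i ∈ s, fixEdgePair (Y i) e b₁ b₂ :=
  Set.preimage_iUnion₂

end FixEdge

section Probability

noncomputable def edgeWt (p : E → ℝ) (e : E) (b : Bool) : ℝ := if b then p e else 1 - p e

lemma edgeWt_nonneg {p : E → ℝ} (hp : ∀ e, 0 ≤ p e ∧ p e ≤ 1) (e : E) (b : Bool) :
    0 ≤ edgeWt p e b := by
  cases b
  · simpa [edgeWt] using (hp e).2
  · simpa [edgeWt] using (hp e).1

lemma sum_edgeWt (p : E → ℝ) (e : E) : ∑ b, edgeWt p e b = 1 := by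
  simp [edgeWt]

lemma wt_nonneg [Fintype E] {p : E → ℝ} (hp : ∀ e, 0 ≤ p e ∧ p e ≤ 1) (C : E → Bool) :
    0 ≤ wt p C :=
  prod_nonneg fun e _ => edgeWt_nonneg hp e (C e)

variable [DecidableEq E]

lemma update_funSplitAt_symm (e : E) (b b' : Bool) (c : {f // f ≠ e} → Bool) :
    update ((Equiv.funSplitAt e Bool).symm (b', c)) e b
      = (Equiv.funSplitAt e Bool).symm (b, c) := by
  ext f
  by_cases hf : f = e <;> simp [Equiv.funSplitAt, Equiv.piSplitAt, update, hf]

variable [Fintype E]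

lemma wt_funSplitAt_symm (p : E → ℝ) (e : E) (b : Bool) (c : {f // f ≠ e} → Bool) :
    wt p ((Equiv.funSplitAt e Bool).symm (b, c))
      = edgeWt p e b * ∏ f : {f // f ≠ e}, edgeWt p f (c f) := by
  rw [wt, Fintype.prod_eq_mul_prod_subtype_ne _ e]
  congr 1
  · simp [edgeWt]
  · refine prod_congr rfl fun f _ => ?_
    simp [edgeWt, f.2]

lemma sum_wt_mul_eq_sum_update (p : E → ℝ) (e : E) (g : (E → Bool) → ℝ) :
    ∑ C, wt p C * g C = ∑ b, edgeWt p e b * ∑ C, wt p C * g (update C e b) := by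
  simp only [← (Equiv.funSplitAt e Bool).symm.sum_comp, Fintype.sum_prod_type,
    wt_funSplitAt_symm, update_funSplitAt_symm]
  refine sum_congr rfl fun b _ => ?_
  simp only [mul_assoc, ← mul_sum, ← sum_mul, sum_edgeWt, one_mul]

lemma Pr2_eq_sum_sum (p : E → ℝ) (X : Set ((E → Bool) × (E → Bool))) :
    Pr2 p X = ∑ C₁, wt p C₁ * ∑ C₂, wt p C₂ * X.indicator 1 (C₁, C₂) := by
  rw [Pr2, Fintype.sum_prod_type]
  refine sum_congr rfl fun C₁ _ => ?_
  rw [mul_sum]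
  refine sum_congr rfl fun C₂ _ => ?_
  by_cases h : (C₁, C₂) ∈ X <;> simp [h]

lemma Pr2_eq_sum_fixEdgePair (p : E → ℝ) (e : E) (X : Set ((E → Bool) × (E → Bool))) :
    Pr2 p X = ∑ b₁, ∑ b₂, edgeWt p e b₁ * edgeWt p e b₂ * Pr2 p (fixEdgePair X e b₁ b₂) := by
  rw [Pr2_eq_sum_sum, sum_wt_mul_eq_sum_update p e]
  refine sum_congr rfl fun b₁ _ => ?_
  have inner (C₁ : E → Bool) :=
    sum_wt_mul_eq_sum_update p e (fun C₂ => X.indicator 1 (update C₁ e b₁, C₂))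
  simp only [inner, Pr2_eq_sum_sum, mul_sum]
  rw [sum_comm]
  refine sum_congr rfl fun b₂ _ => sum_congr rfl fun C₁ _ => sum_congr rfl fun C₂ _ => ?_
  rw [show (fixEdgePair X e b₁ b₂).indicator 1 (C₁, C₂)
    = X.indicator 1 (update C₁ e b₁, update C₂ e b₂) from rfl]
  ring

lemma Pr2_mono {p : E → ℝ} (hp : ∀ e, 0 ≤ p e ∧ p e ≤ 1) {X Y : Set ((E → Bool) × (E → Bool))}
    (h : X ⊆ Y) : Pr2 p X ≤ Pr2 p Y :=
  sum_le_sum fun _ _ => Set.indicator_le_indicator_of_subset h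
    (fun y => mul_nonneg (wt_nonneg hp y.1) (wt_nonneg hp y.2)) _

lemma Pr2_union_add_inter (p : E → ℝ) (X Y : Set ((E → Bool) × (E → Bool))) :
    Pr2 p (X ∪ Y) + Pr2 p (X ∩ Y) = Pr2 p X + Pr2 p Y := by
  simp only [Pr2, ← sum_add_distrib, Set.indicator_union_add_inter_apply]

lemma Pr2_prod (p : E → ℝ) (A B : Set (E → Bool)) : Pr2 p (A ×ˢ B) = Pr p A * Pr p B := by
  rw [Pr2, Pr, Pr, sum_mul_sum, Fintype.sum_prod_type]
  refine sum_congr rfl fun C₁ _ => sum_congr rfl fun C₂ _ => ?_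
  by_cases h₁ : C₁ ∈ A <;> by_cases h₂ : C₂ ∈ B <;> simp [h₁, h₂]

lemma sum_Pr2_fixEdgePair_union_le {p : E → ℝ} (hp : ∀ e, 0 ≤ p e ∧ p e ≤ 1)
    {X : Set ((E → Bool) × (E → Bool))} (hX : IsUpperSet X) (e : E) :
    ∑ b₁, ∑ b₂, edgeWt p e b₁ * edgeWt p e b₂ *
        Pr2 p (fixEdgePair X e false b₁ ∪ fixEdgePair X e b₁ false) ≤ Pr2 p X := by
  have h_inter : Pr2 p (fixEdgePair X e false false)
      ≤ Pr2 p (fixEdgePair X e false true ∩ fixEdgePair X e true false) :=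
    Pr2_mono hp (Set.subset_inter (fixEdgePair_mono hX e le_rfl (Bool.false_le _))
      (fixEdgePair_mono hX e (Bool.false_le _) le_rfl))
  have h_incl_excl : Pr2 p (fixEdgePair X e false true ∪ fixEdgePair X e true false)
      + Pr2 p (fixEdgePair X e false false)
      ≤ Pr2 p (fixEdgePair X e false true) + Pr2 p (fixEdgePair X e true false) := by
    linarith [Pr2_union_add_inter p (fixEdgePair X e false true) (fixEdgePair X e true false)]
  have h_top : Pr2 p (fixEdgePair X e false true ∪ fixEdgePair X e true false)
      ≤ Pr2 p (fixEdgePair X e true true) :=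
    Pr2_mono hp (Set.union_subset (fixEdgePair_mono hX e (Bool.false_le _) le_rfl)
      (fixEdgePair_mono hX e le_rfl (Bool.false_le _)))
  have ha := edgeWt_nonneg hp e true
  have hc := edgeWt_nonneg hp e false
  rw [Pr2_eq_sum_fixEdgePair p e X]
  simp only [Fintype.sum_bool, Set.union_self]
  linarith [mul_le_mul_of_nonneg_left h_top (mul_nonneg ha ha),
    mul_le_mul_of_nonneg_left h_incl_excl (mul_nonneg ha hc)]

end Probability

section Witnesses

variable {A : Set (E → Bool)} {C D : E → Bool} {I : Finset E} {e : E} {b : Bool}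

lemma Witness.mono {A' : Set (E → Bool)} (h : A ⊆ A') (hI : Witness A C I) : Witness A' C I :=
  fun C' hC' => h (hI C' hC')

lemma Witness.congr (hI : Witness A C I) (hCD : ∀ f ∈ I, D f = C f) : Witness A D I :=
  fun C' hC' => hI C' fun f hf => (hC' f hf).trans (hCD f hf)

lemma exists_witness_iff [Fintype E] : (∃ I, Witness A C I) ↔ C ∈ A :=
  ⟨fun ⟨_, hI⟩ => hI C fun _ _ => rfl,
    fun hC => ⟨univ, fun _ hC' => (funext fun f => hC' f (mem_univ f)) ▸ hC⟩⟩

variable [DecidableEq E]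

lemma Witness.update_of_notMem (he : e ∉ I) (hI : Witness A C I) : Witness A (update C e b) I :=
  hI.congr fun _ hf => update_of_ne (ne_of_mem_of_not_mem hf he) _ _

lemma Witness.fixEdge_of_update (hI : Witness A (update C e b) I) :
    Witness (fixEdge A e b) C I := by
  refine fun C' hC' => hI _ fun f hf => ?_
  rcases eq_or_ne f e with rfl | hfe
  · simp
  · simp [update_of_ne hfe, hC' f hf]

lemma Witness.update_of_fixEdge (hI : Witness (fixEdge A e b) C I) :
    Witness A (update C e b) (insert e I) := by
  intro C' hC'
  have hCe : update C' e b = C' := by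
    simpa using (hC' e (mem_insert_self e I)).symm
  have : update C' e (C e) ∈ fixEdge A e b := hI _ fun f hf => by
    rcases eq_or_ne f e with rfl | hfe
    · simp
    · simpa [update_of_ne hfe] using hC' f (mem_insert_of_mem hf)
  simpa [fixEdge, hCe] using this

lemma Witness.fixEdge_erase (hI : Witness (fixEdge A e b) C I) :
    Witness (fixEdge A e b) C (I.erase e) := by
  intro C' hC'
  have : update C' e (C e) ∈ fixEdge A e b := hI _ fun f hf => by
    rcases eq_or_ne f e with rfl | hfe
    · simp
    · simpa [update_of_ne hfe] using hC' f (mem_erase.2 ⟨hfe, hf⟩)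
  simpa [fixEdge] using this

end Witnesses

section DisjOcc

variable [DecidableEq E]

/-- `(C₁, C₂) ∈ A □_S B` means `DisjOcc A B S C₁ (C₁ →_S C₂)` with `S = S(C₁, C₂)`. -/
def DisjOcc (A B : Set (E → Bool)) (S : Finset E) (C D : E → Bool) : Prop :=
  ∃ I J : Finset E, Witness A C I ∧ Witness B D J ∧ ∀ f ∈ I ∩ J, f ∉ S

variable {A B : Set (E → Bool)} {S : Finset E} {C D : E → Bool} {e : E}

lemma DisjOcc.symm (h : DisjOcc A B S C D) : DisjOcc B A S D C :=
  let ⟨I, J, hI, hJ, hIJ⟩ := h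
  ⟨J, I, hJ, hI, fun f hf => hIJ f (inter_comm J I ▸ hf)⟩

lemma disjOcc_empty_iff [Fintype E] : DisjOcc A B ∅ C D ↔ C ∈ A ∧ D ∈ B := by
  simp only [DisjOcc, notMem_empty, not_false_eq_true, implies_true, and_true]
  exact ⟨fun ⟨I, J, hI, hJ⟩ => ⟨exists_witness_iff.1 ⟨I, hI⟩, exists_witness_iff.1 ⟨J, hJ⟩⟩,
    fun ⟨hC, hD⟩ => (exists_witness_iff.2 hC).elim fun I hI =>
      (exists_witness_iff.2 hD).elim fun J hJ => ⟨I, J, hI, hJ⟩⟩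

lemma disjOcc_update_iff (he : e ∉ S) (b₁ b₂ : Bool) :
    DisjOcc A B S (update C e b₁) (update D e b₂)
      ↔ DisjOcc (fixEdge A e b₁) (fixEdge B e b₂) S C D := by
  constructor
  · rintro ⟨I, J, hI, hJ, hIJ⟩
    exact ⟨I, J, hI.fixEdge_of_update, hJ.fixEdge_of_update, hIJ⟩
  · rintro ⟨I, J, hI, hJ, hIJ⟩
    refine ⟨insert e I, insert e J, hI.update_of_fixEdge, hJ.update_of_fixEdge,
      fun f hf hfS => ?_⟩
    have hfe : f ≠ e := ne_of_mem_of_not_mem hfS he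
    simp only [mem_inter, mem_insert, hfe, false_or] at hf
    exact hIJ f (mem_inter.2 hf) hfS

lemma DisjOcc.of_fixEdge_false (hA : IsUpperSet A) {b₁ b₂ : Bool}
    (h : DisjOcc (fixEdge A e false) (fixEdge B e b₂) S C D) :
    DisjOcc A B (insert e S) (update C e b₁) (update D e b₂) := by
  obtain ⟨I, J, hI, hJ, hIJ⟩ := h
  refine ⟨I.erase e, insert e J, ?_, hJ.update_of_fixEdge, fun f hf hfS => ?_⟩
  · exact (hI.fixEdge_erase.mono (fixEdge_false_subset hA e)).update_of_notMem (notMem_erase e I)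
  · obtain ⟨hfI, hfJ⟩ := mem_inter.1 hf
    have hfe : f ≠ e := ne_of_mem_erase hfI
    exact hIJ f (mem_inter.2 ⟨mem_of_mem_erase hfI, (mem_insert.1 hfJ).resolve_left hfe⟩)
      ((mem_insert.1 hfS).resolve_left hfe)

lemma disjOcc_fixEdge_false_of_notMem {I J : Finset E} {b₁ b₂ : Bool}
    (hI : Witness A (update C e b₁) I) (hJ : Witness B (update D e b₂) J)
    (hIJ : ∀ f ∈ I ∩ J, f ∉ insert e S) (he : e ∉ I) :
    DisjOcc (fixEdge A e false) (fixEdge B e b₂) S C D := by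
  have hI' : Witness A (update C e false) I := by
    simpa using hI.update_of_notMem (b := false) he
  exact ⟨I, J, hI'.fixEdge_of_update, hJ.fixEdge_of_update,
    fun f hf hfS => hIJ f hf (mem_insert_of_mem hfS)⟩

lemma disjOcc_insert_update_iff (hA : IsUpperSet A) (hB : IsUpperSet B) (b₁ b₂ : Bool) :
    DisjOcc A B (insert e S) (update C e b₁) (update D e b₂)
      ↔ DisjOcc (fixEdge A e false) (fixEdge B e b₂) S C D
        ∨ DisjOcc (fixEdge A e b₁) (fixEdge B e false) S C D := by
  constructor
  · rintro ⟨I, J, hI, hJ, hIJ⟩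
    by_cases heI : e ∈ I
    · have heJ : e ∉ J := fun heJ => hIJ e (mem_inter.2 ⟨heI, heJ⟩) (mem_insert_self e S)
      exact .inr (disjOcc_fixEdge_false_of_notMem hJ hI (inter_comm I J ▸ hIJ) heJ).symm
    · exact .inl (disjOcc_fixEdge_false_of_notMem hI hJ hIJ heI)
  · rintro (h | h)
    · exact h.of_fixEdge_false hA
    · exact (h.symm.of_fixEdge_false hB).symm

end DisjOcc

section Splice

variable [DecidableEq E] {S : Finset E} {e : E}

lemma splice_empty (C D : E → Bool) : splice ∅ C D = D :=
  funext fun _ => if_neg (notMem_empty _)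

lemma splice_update_of_notMem (he : e ∉ S) (C D : E → Bool) (b₁ b₂ : Bool) :
    splice S (update C e b₁) (update D e b₂) = update (splice S C D) e b₂ := by
  ext f
  rcases eq_or_ne f e with rfl | hfe
  · simp [splice, he]
  · simp [splice, hfe]

lemma splice_insert_update (C D : E → Bool) (b₁ b₂ : Bool) :
    splice (insert e S) (update C e b₁) (update D e b₂) = update (splice S C D) e b₁ := by
  ext f
  rcases eq_or_ne f e with rfl | hfe
  · simp [splice]
  · simp [splice, hfe]

end Splice

namespace PairTree

variable [DecidableEq E] {U : Finset E}

lemma notMem_buildS_of_mem {T : PairTree E} (hT : T.valid U) (C₁ C₂ : E → Bool) {f : E}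
    (hf : f ∈ U) : f ∉ T.buildS C₁ C₂ := by
  induction T generalizing U with
  | leaf => simp [buildS]
  | node e toS child ih =>
    have hrest := ih _ _ (hT.2 (C₁ e) (C₂ e)) (mem_insert_of_mem hf)
    have hfe : f ≠ e := ne_of_mem_of_not_mem hf hT.1
    cases toS <;> simp [buildS, hrest, hfe]

lemma buildS_congr {T : PairTree E} (hT : T.valid U) {C₁ C₂ D₁ D₂ : E → Bool}
    (h₁ : ∀ f ∉ U, C₁ f = D₁ f) (h₂ : ∀ f ∉ U, C₂ f = D₂ f) :
    T.buildS C₁ C₂ = T.buildS D₁ D₂ := by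
  induction T generalizing U with
  | leaf => rfl
  | node e toS child ih =>
    have hrest := ih _ _ (hT.2 (C₁ e) (C₂ e))
      (fun f hf => h₁ f fun hfU => hf (mem_insert_of_mem hfU))
      (fun f hf => h₂ f fun hfU => hf (mem_insert_of_mem hfU))
    simp only [buildS]
    rw [hrest, h₁ e hT.1, h₂ e hT.1]

variable {e : E} {toS : Bool} {child : Bool → Bool → PairTree E}

lemma buildS_node_update (hT : (node e toS child).valid U) (C₁ C₂ : E → Bool) (b₁ b₂ : Bool) :
    (node e toS child).buildS (update C₁ e b₁) (update C₂ e b₂)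
      = if toS then insert e ((child b₁ b₂).buildS C₁ C₂) else (child b₁ b₂).buildS C₁ C₂ := by
  have hrest : (child b₁ b₂).buildS (update C₁ e b₁) (update C₂ e b₂)
      = (child b₁ b₂).buildS C₁ C₂ := by
    refine buildS_congr (hT.2 b₁ b₂) (fun f hf => ?_) (fun f hf => ?_) <;>
      exact update_of_ne (fun h => hf (mem_insert.2 (.inl h))) _ _
  simp [buildS, hrest]

lemma notMem_buildS_child (hT : (node e toS child).valid U) (b₁ b₂ : Bool) (C₁ C₂ : E → Bool) :
    e ∉ (child b₁ b₂).buildS C₁ C₂ :=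
  notMem_buildS_of_mem (hT.2 b₁ b₂) C₁ C₂ (mem_insert_self e U)

end PairTree

open PairTree

section Box

variable [DecidableEq E]

lemma mem_BoxS {T : PairTree E} {A B : Set (E → Bool)} {C₁ C₂ : E → Bool} :
    (C₁, C₂) ∈ BoxS T A B
      ↔ DisjOcc A B (T.buildS C₁ C₂) C₁ (splice (T.buildS C₁ C₂) C₁ C₂) :=
  Iff.rfl

lemma BoxS_leaf [Fintype E] (A B : Set (E → Bool)) : BoxS (leaf : PairTree E) A B = A ×ˢ B := by
  ext ⟨C₁, C₂⟩
  rw [mem_BoxS, show (leaf : PairTree E).buildS C₁ C₂ = ∅ from rfl, splice_empty,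
    disjOcc_empty_iff, Set.mem_prod]

variable {U : Finset E} {e : E} {child : Bool → Bool → PairTree E}

lemma fixEdgePair_BoxS_node_false (hT : (node e false child).valid U)
    (A B : Set (E → Bool)) (b₁ b₂ : Bool) :
    fixEdgePair (BoxS (node e false child) A B) e b₁ b₂
      = BoxS (child b₁ b₂) (fixEdge A e b₁) (fixEdge B e b₂) := by
  ext ⟨C₁, C₂⟩
  have he := notMem_buildS_child hT b₁ b₂ C₁ C₂
  change (update C₁ e b₁, update C₂ e b₂) ∈ BoxS _ A B ↔ _
  rw [mem_BoxS, mem_BoxS, buildS_node_update hT, if_neg Bool.false_ne_true,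
    splice_update_of_notMem he, disjOcc_update_iff he]

lemma fixEdgePair_BoxS_node_true (hT : (node e true child).valid U)
    {A B : Set (E → Bool)} (hA : IsUpperSet A) (hB : IsUpperSet B) (b₁ b₂ : Bool) :
    fixEdgePair (BoxS (node e true child) A B) e b₁ b₂
      = BoxS (child b₁ b₂) (fixEdge A e false) (fixEdge B e b₁)
        ∪ BoxS (child b₁ b₂) (fixEdge A e b₁) (fixEdge B e false) := by
  ext ⟨C₁, C₂⟩
  change (update C₁ e b₁, update C₂ e b₂) ∈ BoxS _ A B ↔ _
  rw [Set.mem_union, mem_BoxS, mem_BoxS, mem_BoxS, buildS_node_update hT, if_pos rfl,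
    splice_insert_update, disjOcc_insert_update_iff hA hB]

end Box

section Families

def IsUpperFamily (𝓕 : Set (Set (E → Bool) × Set (E → Bool))) : Prop :=
  ∀ ab ∈ 𝓕, IsUpperSet ab.1 ∧ IsUpperSet ab.2

def prodUnion (𝓕 : Set (Set (E → Bool) × Set (E → Bool))) : Set ((E → Bool) × (E → Bool)) :=
  ⋃ ab ∈ 𝓕, ab.1 ×ˢ ab.2

lemma prodUnion_union (𝓕 𝓖 : Set (Set (E → Bool) × Set (E → Bool))) :
    prodUnion (𝓕 ∪ 𝓖) = prodUnion 𝓕 ∪ prodUnion 𝓖 :=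
  Set.biUnion_union 𝓕 𝓖 _

lemma IsUpperFamily.union {𝓕 𝓖 : Set (Set (E → Bool) × Set (E → Bool))}
    (h𝓕 : IsUpperFamily 𝓕) (h𝓖 : IsUpperFamily 𝓖) : IsUpperFamily (𝓕 ∪ 𝓖) :=
  fun ab hab => hab.elim (h𝓕 ab) (h𝓖 ab)

lemma IsUpperFamily.isUpperSet_prodUnion {𝓕 : Set (Set (E → Bool) × Set (E → Bool))}
    (h𝓕 : IsUpperFamily 𝓕) : IsUpperSet (prodUnion 𝓕) :=
  isUpperSet_iUnion₂ fun ab hab => (h𝓕 ab hab).1.prod (h𝓕 ab hab).2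

variable [DecidableEq E]

def fixEdgeFamily (𝓕 : Set (Set (E → Bool) × Set (E → Bool))) (e : E) (b₁ b₂ : Bool) :
    Set (Set (E → Bool) × Set (E → Bool)) :=
  (fun ab => (fixEdge ab.1 e b₁, fixEdge ab.2 e b₂)) '' 𝓕

lemma IsUpperFamily.fixEdgeFamily {𝓕 : Set (Set (E → Bool) × Set (E → Bool))}
    (h𝓕 : IsUpperFamily 𝓕) (e : E) (b₁ b₂ : Bool) : IsUpperFamily (fixEdgeFamily 𝓕 e b₁ b₂) := by
  rintro _ ⟨ab, hab, rfl⟩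
  exact ⟨IsUpperSet.fixEdge (h𝓕 ab hab).1 e b₁, IsUpperSet.fixEdge (h𝓕 ab hab).2 e b₂⟩

lemma fixEdgePair_prodUnion (𝓕 : Set (Set (E → Bool) × Set (E → Bool))) (e : E) (b₁ b₂ : Bool) :
    fixEdgePair (prodUnion 𝓕) e b₁ b₂ = prodUnion (fixEdgeFamily 𝓕 e b₁ b₂) := by
  rw [prodUnion, fixEdgePair_biUnion, prodUnion, fixEdgeFamily, Set.biUnion_image]
  rfl

def boxUnion (T : PairTree E) (𝓕 : Set (Set (E → Bool) × Set (E → Bool))) :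
    Set ((E → Bool) × (E → Bool)) :=
  ⋃ ab ∈ 𝓕, BoxS T ab.1 ab.2

variable {𝓕 : Set (Set (E → Bool) × Set (E → Bool))}

lemma boxUnion_leaf [Fintype E] : boxUnion leaf 𝓕 = prodUnion 𝓕 := by
  simp only [boxUnion, BoxS_leaf, prodUnion]

lemma fixEdgePair_boxUnion_node_false (hT : (node e false child).valid U) (b₁ b₂ : Bool) :
    fixEdgePair (boxUnion (node e false child) 𝓕) e b₁ b₂
      = boxUnion (child b₁ b₂) (fixEdgeFamily 𝓕 e b₁ b₂) := by
  simp only [boxUnion, fixEdgePair_biUnion, fixEdgePair_BoxS_node_false hT, fixEdgeFamily,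
    Set.biUnion_image]

lemma fixEdgePair_boxUnion_node_true (hT : (node e true child).valid U)
    (h𝓕 : IsUpperFamily 𝓕) (b₁ b₂ : Bool) :
    fixEdgePair (boxUnion (node e true child) 𝓕) e b₁ b₂
      = boxUnion (child b₁ b₂) (fixEdgeFamily 𝓕 e false b₁ ∪ fixEdgeFamily 𝓕 e b₁ false) := by
  calc _ = ⋃ ab ∈ 𝓕, (BoxS (child b₁ b₂) (fixEdge ab.1 e false) (fixEdge ab.2 e b₁)
          ∪ BoxS (child b₁ b₂) (fixEdge ab.1 e b₁) (fixEdge ab.2 e false)) := by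
        rw [boxUnion, fixEdgePair_biUnion]
        exact Set.iUnion₂_congr fun ab hab =>
          fixEdgePair_BoxS_node_true hT (h𝓕 ab hab).1 (h𝓕 ab hab).2 b₁ b₂
    _ = _ := by
        simp only [boxUnion, Set.biUnion_union, fixEdgeFamily, Set.biUnion_image,
          Set.iUnion_union_distrib]

end Families

theorem Pr2_boxUnion_le [Fintype E] [DecidableEq E] {p : E → ℝ} (hp : ∀ e, 0 ≤ p e ∧ p e ≤ 1)
    {T : PairTree E} {U : Finset E} (hT : T.valid U)
    {𝓕 : Set (Set (E → Bool) × Set (E → Bool))} (h𝓕 : IsUpperFamily 𝓕) :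
    Pr2 p (boxUnion T 𝓕) ≤ Pr2 p (prodUnion 𝓕) := by
  induction T generalizing U 𝓕 with
  | leaf => rw [boxUnion_leaf]
  | node e toS child ih =>
    have step (b₁ b₂ : Bool) {𝓖 : Set (Set (E → Bool) × Set (E → Bool))}
        (h𝓖 : IsUpperFamily 𝓖) :
        edgeWt p e b₁ * edgeWt p e b₂ * Pr2 p (boxUnion (child b₁ b₂) 𝓖)
          ≤ edgeWt p e b₁ * edgeWt p e b₂ * Pr2 p (prodUnion 𝓖) :=
      mul_le_mul_of_nonneg_left (ih b₁ b₂ (hT.2 b₁ b₂) h𝓖)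
        (mul_nonneg (edgeWt_nonneg hp e b₁) (edgeWt_nonneg hp e b₂))
    rw [Pr2_eq_sum_fixEdgePair p e]
    cases toS with
    | false =>
      calc _ ≤ ∑ b₁, ∑ b₂, edgeWt p e b₁ * edgeWt p e b₂ *
              Pr2 p (fixEdgePair (prodUnion 𝓕) e b₁ b₂) := by
            simp_rw [fixEdgePair_boxUnion_node_false hT, fixEdgePair_prodUnion]
            exact sum_le_sum fun b₁ _ => sum_le_sum fun b₂ _ =>
              step b₁ b₂ (h𝓕.fixEdgeFamily e b₁ b₂)
        _ = Pr2 p (prodUnion 𝓕) := (Pr2_eq_sum_fixEdgePair p e _).symm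
    | true =>
      calc _ ≤ ∑ b₁, ∑ b₂, edgeWt p e b₁ * edgeWt p e b₂ *
              Pr2 p (fixEdgePair (prodUnion 𝓕) e false b₁
                ∪ fixEdgePair (prodUnion 𝓕) e b₁ false) := by
            simp_rw [fixEdgePair_boxUnion_node_true hT h𝓕, fixEdgePair_prodUnion,
              ← prodUnion_union]
            exact sum_le_sum fun b₁ _ => sum_le_sum fun b₂ _ =>
              step b₁ b₂ ((h𝓕.fixEdgeFamily e false b₁).union (h𝓕.fixEdgeFamily e b₁ false))
        _ ≤ Pr2 p (prodUnion 𝓕) := sum_Pr2_fixEdgePair_union_le hp h𝓕.isUpperSet_prodUnion e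

/-- Decision tree van den Berg–Kesten inequality. -/
theorem decision_tree_vdBK
    {V : Type*} [Fintype V] [DecidableEq V] (G : SimpleGraph V) [DecidableRel G.Adj]
    (p : G.edgeSet → ℝ) (hp : ∀ e, 0 ≤ p e ∧ p e ≤ 1)
    (T : PairTree G.edgeSet) (hT : T.valid ∅)
    (A B : Set (G.edgeSet → Bool)) (hA : UpwardClosed A) (hB : UpwardClosed B) :
    Pr2 p (BoxS T A B) ≤ Pr p A * Pr p B := by
  have h𝓕 : IsUpperFamily {(A, B)} := by
    rintro _ rfl
    exact ⟨hA.isUpperSet, hB.isUpperSet⟩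
  have h := Pr2_boxUnion_le hp hT h𝓕
  rwa [boxUnion, prodUnion, Set.biUnion_singleton, Set.biUnion_singleton, Pr2_prod] at h

end DTPerc
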